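/- Splitting of logarithmic derivations for separated variables: let $\mathcal{O} = \mathbb{C}[[x_1,\dots,x_n,y_1,\dots,y_m]]$, let $g \in \mathbb{C}[[x_1,\dots,x_n]] \subseteq \mathcal{O}$ and $h \in \mathbb{C}[[y_1,\dots,y_m]] \subseteq \mathcal{O}$ be reduced. Then every logarithmic derivation $\delta \in \mathrm{Der}(\log gh)$ decomposes uniquely as $\delta = \delta_1 + \delta_2$, where $\delta_1$ lies in the $\mathcal{O}$-span of $\partial_{x_1},\dots,\partial_{x_n}$ and satisfies $\delta_1(g) \in (g)$, and $\delta_2$ lies in the $\mathcal{O}$-span of $\partial_{y_1},\dots,\partial_{y_m}$ and satisfies $\delta_2(h) \in (h)$; that is, $\mathrm{Der}(\log gh)$ is the direct sum of these two submodules. -/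

import Mathlib

set_option maxHeartbeats 1000000
set_option synthInstance.maxHeartbeats 400000
set_option linter.unusedSectionVars false

open MvPowerSeries Finset

section Core

variable {σ : Type*} [DecidableEq σ]

/-- Formal partial derivative of a multivariate power series with respect to the
variable `i`. -/
noncomputable def pderiv (i : σ) (f : MvPowerSeries σ ℂ) : MvPowerSeries σ ℂ :=
  fun m => ((m i : ℂ) + 1) * MvPowerSeries.coeff (m + Finsupp.single i 1) f

theorem coeff_pderiv (i : σ) (f : MvPowerSeries σ ℂ) (m : σ →₀ ℕ) :
    MvPowerSeries.coeff m (pderiv i f) =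
      ((m i : ℂ) + 1) * MvPowerSeries.coeff (m + Finsupp.single i 1) f := rfl

private lemma pderiv_key (i : σ) (f g : MvPowerSeries σ ℂ) (m : σ →₀ ℕ) :
    (∑ p ∈ (antidiagonal (m + Finsupp.single i 1) : Finset ((σ →₀ ℕ) × (σ →₀ ℕ))),
        (p.2 i : ℂ) * (MvPowerSeries.coeff p.1 f * MvPowerSeries.coeff p.2 g))
      = ∑ q ∈ (antidiagonal m : Finset ((σ →₀ ℕ) × (σ →₀ ℕ))),
          MvPowerSeries.coeff q.1 f * MvPowerSeries.coeff q.2 (pderiv i g) := by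
  classical
  rw [← Finset.sum_filter_of_ne (p := fun p : (σ →₀ ℕ) × (σ →₀ ℕ) => p.2 i ≠ 0)
    (by
      intro p _ hp hzero
      apply hp
      rw [hzero]
      simp)]
  refine Finset.sum_nbij' (fun p => (p.1, p.2 - Finsupp.single i 1))
    (fun q => (q.1, q.2 + Finsupp.single i 1)) ?_ ?_ ?_ ?_ ?_
  · intro p hp
    simp only [Finset.mem_filter, Finset.HasAntidiagonal.mem_antidiagonal] at hp
    obtain ⟨hsum, hne⟩ := hp
    rw [Finset.HasAntidiagonal.mem_antidiagonal]
    ext j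
    have hj := DFunLike.congr_fun hsum j
    simp only [Finsupp.add_apply, Finsupp.tsub_apply, Finsupp.single_apply] at hj ⊢
    by_cases hji : i = j
    · subst hji
      simp at hj ⊢
      omega
    · simp only [if_neg hji] at hj ⊢
      omega
  · intro q hq
    rw [Finset.HasAntidiagonal.mem_antidiagonal] at hq
    simp only [Finset.mem_filter, Finset.HasAntidiagonal.mem_antidiagonal]
    constructor
    · rw [← hq]; abel
    · simp [Finsupp.add_apply, Finsupp.single_apply]
  · intro p hp
    simp only [Finset.mem_filter, Finset.HasAntidiagonal.mem_antidiagonal] at hp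
    obtain ⟨hsum, hne⟩ := hp
    have hle : Finsupp.single i 1 ≤ p.2 := by
      rw [Finsupp.single_le_iff]; omega
    simp [tsub_add_cancel_of_le hle]
  · intro q _
    simp
  · intro p hp
    simp only [Finset.mem_filter, Finset.HasAntidiagonal.mem_antidiagonal] at hp
    obtain ⟨hsum, hne⟩ := hp
    have hle : Finsupp.single i 1 ≤ p.2 := by
      rw [Finsupp.single_le_iff]; omega
    rw [_root_.coeff_pderiv, tsub_add_cancel_of_le hle]
    have h2 : (((p.2 - Finsupp.single i 1 : σ →₀ ℕ) i : ℕ) : ℂ) + 1 = (p.2 i : ℂ) := by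
      have hx : (p.2 - Finsupp.single i 1 : σ →₀ ℕ) i = p.2 i - 1 := by
        simp [Finsupp.tsub_apply]
      rw [hx]
      have h1 : 1 ≤ p.2 i := by omega
      push_cast [h1]
      ring
    rw [h2]
    ring

theorem pderiv_mul (i : σ) (f g : MvPowerSeries σ ℂ) :
    pderiv i (f * g) = f * pderiv i g + g * pderiv i f := by
  classical
  apply MvPowerSeries.ext
  intro m
  have e1 : MvPowerSeries.coeff m (pderiv i (f * g))
      = ∑ p ∈ (antidiagonal (m + Finsupp.single i 1) : Finset ((σ →₀ ℕ) × (σ →₀ ℕ))),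
          ((p.1 i : ℂ) * (MvPowerSeries.coeff p.1 f * MvPowerSeries.coeff p.2 g)
            + (p.2 i : ℂ) * (MvPowerSeries.coeff p.1 f * MvPowerSeries.coeff p.2 g)) := by
    rw [_root_.coeff_pderiv, coeff_mul, Finset.mul_sum]
    refine Finset.sum_congr rfl ?_
    intro p hp
    rw [Finset.HasAntidiagonal.mem_antidiagonal] at hp
    have hj := DFunLike.congr_fun hp i
    simp only [Finsupp.add_apply, Finsupp.single_apply, if_pos rfl] at hj
    have hc : (p.1 i : ℂ) + (p.2 i : ℂ) = (m i : ℂ) + 1 := by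
      exact_mod_cast congrArg (Nat.cast : ℕ → ℂ) hj
    rw [← hc, add_mul]
  have e3 : (∑ p ∈ (antidiagonal (m + Finsupp.single i 1) : Finset ((σ →₀ ℕ) × (σ →₀ ℕ))),
      (p.2 i : ℂ) * (MvPowerSeries.coeff p.1 f * MvPowerSeries.coeff p.2 g))
      = MvPowerSeries.coeff m (f * pderiv i g) := by
    rw [coeff_mul]
    exact pderiv_key i f g m
  have e4 : (∑ p ∈ (antidiagonal (m + Finsupp.single i 1) : Finset ((σ →₀ ℕ) × (σ →₀ ℕ))),
      (p.1 i : ℂ) * (MvPowerSeries.coeff p.1 f * MvPowerSeries.coeff p.2 g))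
      = MvPowerSeries.coeff m (g * pderiv i f) := by
    rw [coeff_mul, ← pderiv_key i g f m]
    refine Finset.sum_nbij' Prod.swap Prod.swap ?_ ?_ ?_ ?_ ?_
    · intro p hp
      rw [Finset.HasAntidiagonal.mem_antidiagonal] at hp ⊢
      rw [← hp]
      exact add_comm _ _
    · intro p hp
      rw [Finset.HasAntidiagonal.mem_antidiagonal] at hp ⊢
      rw [← hp]
      exact add_comm _ _
    · intro p _
      simp
    · intro p _
      simp
    · intro p _
      simp only [Prod.fst_swap, Prod.snd_swap]
      ring
  rw [map_add, e1, Finset.sum_add_distrib, e3, e4]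
  ring

theorem pderiv_add (i : σ) (f g : MvPowerSeries σ ℂ) :
    pderiv i (f + g) = pderiv i f + pderiv i g := by
  apply MvPowerSeries.ext
  intro m
  show ((m i : ℂ) + 1) * MvPowerSeries.coeff (m + Finsupp.single i 1) (f + g) = _
  rw [map_add, map_add]
  show _ = ((m i : ℂ) + 1) * _ + ((m i : ℂ) + 1) * _
  ring

theorem pderiv_smul (i : σ) (c : ℂ) (f : MvPowerSeries σ ℂ) :
    pderiv i (c • f) = c • pderiv i f := by
  apply MvPowerSeries.ext
  intro m
  show ((m i : ℂ) + 1) * MvPowerSeries.coeff (m + Finsupp.single i 1) (c • f) = _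
  rw [map_smul]
  show _ = c • (((m i : ℂ) + 1) * MvPowerSeries.coeff (m + Finsupp.single i 1) f)
  simp [smul_eq_mul]
  ring

/-- The formal partial derivative as a `ℂ`-linear derivation. -/
noncomputable def pderivD (i : σ) : Derivation ℂ (MvPowerSeries σ ℂ) (MvPowerSeries σ ℂ) where
  toFun := pderiv i
  map_add' := pderiv_add i
  map_smul' c f := by simpa using pderiv_smul i c f
  map_one_eq_zero' := by
    apply MvPowerSeries.ext
    intro m
    classical
    show ((m i : ℂ) + 1) * MvPowerSeries.coeff (m + Finsupp.single i 1) 1 = _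
    rw [MvPowerSeries.coeff_one]
    have : m + Finsupp.single i 1 ≠ 0 := by
      intro h
      have := DFunLike.congr_fun h i
      simp [Finsupp.add_apply, Finsupp.single_apply] at this
    rw [if_neg this]
    simp
  leibniz' f g := by
    simpa [smul_eq_mul] using pderiv_mul i f g

/-- The module of logarithmic derivations along the divisor defined by `f`. -/
noncomputable def logDer (f : MvPowerSeries σ ℂ) :
    Submodule (MvPowerSeries σ ℂ) (Derivation ℂ (MvPowerSeries σ ℂ) (MvPowerSeries σ ℂ)) where
  carrier := {δ | δ f ∈ Ideal.span {f}}
  add_mem' := by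
    intro a b ha hb
    simpa using Ideal.add_mem _ ha hb
  zero_mem' := by simp
  smul_mem' := by
    intro c δ hδ
    simpa [smul_eq_mul] using Ideal.mul_mem_left _ c hδ

/-- The Jacobian ideal of `f`: the ideal generated by all partial derivatives of `f`. -/
noncomputable def jacobianIdeal (f : MvPowerSeries σ ℂ) : Ideal (MvPowerSeries σ ℂ) :=
  Ideal.span (Set.range fun i => pderiv i f)

/-- `f` depends only on the variables in `s`. -/
def DependsOnlyOn (s : Set σ) (f : MvPowerSeries σ ℂ) : Prop :=
  ∀ m : σ →₀ ℕ, (∃ i ∉ s, m i ≠ 0) → MvPowerSeries.coeff m f = 0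

/-- `g` and `h` have no common irreducible factor. -/
def NoCommonFactor (g h : MvPowerSeries σ ℂ) : Prop :=
  ∀ p : MvPowerSeries σ ℂ, Irreducible p → p ∣ g → ¬ p ∣ h

end Core

/-!
Every derivation is `D = ∑ₖ D(Xₖ) ∂ₖ`, since a derivation of a power series ring in finitely many
variables is determined by its values on the variables. Hence `D = Dₓ + D_y` splits along the two
groups of variables, with `Dₓ h = 0` and `D_y g = 0`, and `D(gh) = g D_y(h) + h Dₓ(g)`. If `gh`
divides this, then `g ∣ h Dₓ(g)`, and the point is that `g ∣ h w` forces `g ∣ w` when `g` involves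
only the `x`'s and `h ≠ 0` only the `y`'s: expanding `w` in the `y`'s with coefficients that are
series in the `x`'s, `g` divides every coefficient, by induction along the lexicographic order
starting from the lowest monomial of `h`.
-/

theorem Derivation.sum_apply {R A M ι : Type*} [CommSemiring R] [CommSemiring A] [Algebra R A]
    [AddCommMonoid M] [Module A M] [Module R M] (t : Finset ι) (D : ι → Derivation R A M)
    (a : A) : (∑ i ∈ t, D i) a = ∑ i ∈ t, D i a := by
  rw [← Derivation.coeFnAddMonoidHom_apply, map_sum, Finset.sum_apply]
  rfl

namespace MvPowerSeries

section DerivationExt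

variable {σ R : Type*} [CommRing R]

theorem mem_span_X_pow_of_coeff_eq_zero (N : ℕ) (t : Finset σ) {f : MvPowerSeries σ R}
    (hf : ∀ μ : σ →₀ ℕ, (∀ k ∈ t, μ k < N) → coeff μ f = 0) :
    f ∈ Ideal.span (Set.range fun k => (X k : MvPowerSeries σ R) ^ N) := by
  classical
  induction t using Finset.induction_on generalizing f with
  | empty =>
    rw [show f = 0 from ext fun μ => hf μ (by simp)]
    exact zero_mem _
  | insert a t _ ih =>
    let f₁ : MvPowerSeries σ R := fun μ => if μ a < N then 0 else coeff μ f
    have hf₁ : (X a : MvPowerSeries σ R) ^ N ∣ f₁ :=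
      X_pow_dvd_iff.mpr fun μ hμ => if_pos hμ
    have hf₂ : f - f₁ ∈ Ideal.span (Set.range fun k => (X k : MvPowerSeries σ R) ^ N) := by
      refine ih fun μ hμ => ?_
      rw [map_sub, show coeff μ f₁ = if μ a < N then 0 else coeff μ f from rfl]
      split_ifs with ha
      · rw [hf μ (Finset.forall_mem_insert _ _ _ |>.mpr ⟨ha, hμ⟩), sub_zero]
      · exact sub_self _
    obtain ⟨q, hq⟩ := hf₁
    rw [← sub_add_cancel f f₁]
    exact add_mem hf₂ (hq ▸ Ideal.mul_mem_right q _ (Ideal.subset_span ⟨a, rfl⟩))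

theorem coeff_eq_zero_of_mem_span_X_pow [Fintype σ] {N : ℕ} {f : MvPowerSeries σ R}
    (hf : f ∈ Ideal.span (Set.range fun k => (X k : MvPowerSeries σ R) ^ N))
    {μ : σ →₀ ℕ} (hμ : ∀ k, μ k < N) : coeff μ f = 0 := by
  obtain ⟨c, rfl⟩ := Ideal.mem_span_range_iff_exists_fun.mp hf
  rw [map_sum]
  exact Finset.sum_eq_zero fun k _ => X_pow_dvd_iff.mp (dvd_mul_left _ _) μ (hμ k)

variable {D : Derivation R (MvPowerSeries σ R) (MvPowerSeries σ R)}

theorem _root_.Derivation.apply_mem_span_X_pow (hD : ∀ k, D (X k) = 0) {N : ℕ}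
    {f : MvPowerSeries σ R}
    (hf : f ∈ Ideal.span (Set.range fun k => (X k : MvPowerSeries σ R) ^ N)) :
    D f ∈ Ideal.span (Set.range fun k => (X k : MvPowerSeries σ R) ^ N) := by
  induction hf using Submodule.span_induction with
  | mem _ hx =>
    obtain ⟨k, rfl⟩ := hx
    rw [Derivation.leibniz_pow, hD, smul_zero, smul_zero]
    exact zero_mem _
  | zero => rw [map_zero]; exact zero_mem _
  | add _ _ _ _ hx hy => rw [map_add]; exact add_mem hx hy
  | smul a x hx hDx =>
    rw [smul_eq_mul, Derivation.leibniz]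
    exact add_mem (Ideal.mul_mem_left _ a hDx) (Ideal.mul_mem_right (D a) _ hx)

theorem _root_.Derivation.apply_coe_eq_zero (hD : ∀ k, D (X k) = 0) (p : MvPolynomial σ R) :
    D p = 0 := by
  induction p using MvPolynomial.induction_on with
  | C r => rw [MvPolynomial.coe_C, c_eq_algebraMap, Derivation.map_algebraMap]
  | add p q hp hq => rw [MvPolynomial.coe_add, map_add, hp, hq, add_zero]
  | mul_X p k hp =>
    rw [MvPolynomial.coe_mul, MvPolynomial.coe_X, Derivation.leibniz, hD, hp, smul_zero,
      smul_zero, add_zero]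

theorem derivation_eq_zero [Fintype σ] (hD : ∀ k, D (X k) = 0) : D = 0 := by
  classical
  ext f ν
  -- `f` agrees with a polynomial up to an element of `(X k ^ N)ₖ`, an ideal that `D` preserves
  let N := ν.degree + 1
  let P := trunc' R (Finsupp.equivFunOnFinite.symm fun _ => ν.degree) f
  have hfP : f - P ∈ Ideal.span (Set.range fun k => (X k : MvPowerSeries σ R) ^ N) := by
    refine mem_span_X_pow_of_coeff_eq_zero N Finset.univ fun μ hμ => ?_
    have hμν : μ ≤ Finsupp.equivFunOnFinite.symm fun _ => ν.degree := fun k => by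
      simpa using Nat.lt_succ_iff.mp (hμ k (Finset.mem_univ k))
    rw [map_sub, MvPolynomial.coeff_coe, coeff_trunc', if_pos hμν, sub_self]
  rw [← sub_add_cancel f P, map_add, Derivation.apply_coe_eq_zero hD, add_zero]
  exact coeff_eq_zero_of_mem_span_X_pow (Derivation.apply_mem_span_X_pow hD hfP)
    fun k => Nat.lt_succ_of_le (ν.le_degree k)

theorem derivation_ext [Fintype σ] {D₁ D₂ : Derivation R (MvPowerSeries σ R) (MvPowerSeries σ R)}
    (h : ∀ k, D₁ (X k) = D₂ (X k)) : D₁ = D₂ :=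
  sub_eq_zero.mp <| derivation_eq_zero fun k => by rw [Derivation.sub_apply, h, sub_self]

end DerivationExt

end MvPowerSeries

theorem DependsOnlyOn.eq_zero_of_coeff_ne_zero {σ : Type*} {s : Set σ} {f : MvPowerSeries σ ℂ}
    (hf : DependsOnlyOn s f) {m : σ →₀ ℕ} (hm : coeff m f ≠ 0) {i : σ} (hi : i ∉ s) : m i = 0 :=
  by_contra fun hmi => hm (hf m ⟨i, hi, hmi⟩)

section PartialDerivatives

variable {σ : Type*} [DecidableEq σ]

theorem pderivD_eq_pderiv (i : σ) : pderivD i = MvPowerSeries.pderiv ℂ i := by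
  ext f m
  rw [MvPowerSeries.coeff_pderiv, mul_comm]
  rfl

theorem pderivD_X (i j : σ) : pderivD i (X j : MvPowerSeries σ ℂ) = if i = j then 1 else 0 := by
  rw [pderivD_eq_pderiv, MvPowerSeries.pderiv_X, Pi.single_apply]
  exact if_congr eq_comm rfl rfl

theorem dependsOnlyOn_X {s : Set σ} {i : σ} (hi : i ∈ s) :
    DependsOnlyOn s (X i : MvPowerSeries σ ℂ) := by
  rintro m ⟨j, hj, hmj⟩
  rw [coeff_X, if_neg]
  rintro rfl
  exact hmj (Finsupp.single_eq_of_ne (by rintro rfl; exact hj hi))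

theorem pderivD_eq_zero_of_dependsOnlyOn {s : Set σ} {f : MvPowerSeries σ ℂ}
    (hf : DependsOnlyOn s f) {i : σ} (hi : i ∉ s) : pderivD i f = 0 := by
  ext m
  exact (mul_eq_zero_of_right _ (hf _ ⟨i, hi, by simp⟩))

theorem derivation_eq_sum_pderivD [Fintype σ]
    (D : Derivation ℂ (MvPowerSeries σ ℂ) (MvPowerSeries σ ℂ)) :
    D = ∑ k, D (X k) • pderivD k :=
  MvPowerSeries.derivation_ext fun j => by
    rw [Derivation.sum_apply]
    simp [pderivD_X]

theorem apply_eq_zero_of_mem_span_pderivD {ι : Type*} {v : ι → σ}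
    {s : Set σ} (hv : ∀ i, v i ∉ s) {f : MvPowerSeries σ ℂ} (hf : DependsOnlyOn s f)
    {D : Derivation ℂ (MvPowerSeries σ ℂ) (MvPowerSeries σ ℂ)}
    (hD : D ∈ Submodule.span (MvPowerSeries σ ℂ) (Set.range fun i => pderivD (v i))) :
    D f = 0 := by
  induction hD using Submodule.span_induction with
  | mem _ hx =>
    obtain ⟨i, rfl⟩ := hx
    exact pderivD_eq_zero_of_dependsOnlyOn hf (hv i)
  | zero => rfl
  | add _ _ _ _ hx hy => rw [Derivation.add_apply, hx, hy, add_zero]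
  | smul a _ _ hx => rw [Derivation.smul_apply, hx, smul_zero]

theorem sum_smul_pderivD_mem_span {ι : Type*} [Fintype ι] (v : ι → σ)
    (a : ι → MvPowerSeries σ ℂ) :
    ∑ i, a i • pderivD (v i) ∈
      Submodule.span (MvPowerSeries σ ℂ) (Set.range fun i => pderivD (v i)) :=
  Submodule.sum_mem _ fun i _ => Submodule.smul_mem _ _ (Submodule.subset_span ⟨i, rfl⟩)

end PartialDerivatives

section SeparatedVariables

variable {σ : Type*} {s : Set σ}

theorem coeff_add_mul_of_dependsOnlyOn [DecidableEq σ] {f : MvPowerSeries σ ℂ}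
    (hf : DependsOnlyOn s f) (u : MvPowerSeries σ ℂ) {a b : σ →₀ ℕ} (hb : ∀ i ∈ s, b i = 0) :
    coeff (a + b) (f * u) = ∑ p ∈ antidiagonal a, coeff p.1 f * coeff (p.2 + b) u := by
  rw [coeff_mul]
  symm
  refine Finset.sum_bij_ne_zero (fun p _ _ => (p.1, p.2 + b)) ?_ ?_ ?_ fun _ _ _ => rfl
  · rintro p hp -
    rw [HasAntidiagonal.mem_antidiagonal] at hp ⊢
    rw [← hp, add_assoc]
  · rintro p - - q - - hpq
    simp only [Prod.mk.injEq, add_left_inj] at hpq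
    exact Prod.ext hpq.1 hpq.2
  · rintro q hq hne
    rw [HasAntidiagonal.mem_antidiagonal] at hq
    have hq₁ : ∀ i ∉ s, q.1 i = 0 :=
      fun i hi => hf.eq_zero_of_coeff_ne_zero (left_ne_zero_of_mul hne) hi
    have hle : q.1 ≤ a := fun i => by
      have := DFunLike.congr_fun hq i
      by_cases hi : i ∈ s
      · simp only [Finsupp.add_apply, hb i hi] at this; omega
      · simp [hq₁ i hi]
    have hq₂ : a - q.1 + b = q.2 := Finsupp.ext fun i => by
      have := DFunLike.congr_fun hq i
      have := hle i
      simp only [Finsupp.add_apply, Finsupp.tsub_apply] at *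
      omega
    refine ⟨(q.1, a - q.1), ?_, by rwa [hq₂], Prod.ext rfl hq₂⟩
    rw [HasAntidiagonal.mem_antidiagonal, add_tsub_cancel_of_le hle]

open Classical in
/-- For `b` supported off `s`, the series in the variables of `s` that is the coefficient of
the monomial `b` when `w` is expanded in the variables outside `s`. -/
noncomputable def slice (s : Set σ) (b : σ →₀ ℕ) (w : MvPowerSeries σ ℂ) : MvPowerSeries σ ℂ :=
  fun a => if ∀ i ∉ s, a i = 0 then coeff (a + b) w else 0

theorem coeff_slice_of_forall {b a : σ →₀ ℕ} (w : MvPowerSeries σ ℂ) (ha : ∀ i ∉ s, a i = 0) :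
    coeff a (slice s b w) = coeff (a + b) w :=
  if_pos ha

theorem coeff_slice_of_exists {b a : σ →₀ ℕ} (w : MvPowerSeries σ ℂ) (ha : ∃ i ∉ s, a i ≠ 0) :
    coeff a (slice s b w) = 0 :=
  if_neg fun h => ha.elim fun i hi => hi.2 (h i hi.1)

theorem slice_mul_of_dependsOnlyOn {g : MvPowerSeries σ ℂ} (hg : DependsOnlyOn s g)
    (u : MvPowerSeries σ ℂ) {b : σ →₀ ℕ} (hb : ∀ i ∈ s, b i = 0) :
    slice s b (g * u) = g * slice s b u := by
  classical
  ext a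
  by_cases ha : ∀ i ∉ s, a i = 0
  · rw [coeff_slice_of_forall _ ha, coeff_add_mul_of_dependsOnlyOn hg u hb, coeff_mul]
    refine Finset.sum_congr rfl fun p hp => ?_
    rw [HasAntidiagonal.mem_antidiagonal] at hp
    rw [coeff_slice_of_forall _ fun i hi => by
      have := DFunLike.congr_fun hp i
      simp only [Finsupp.add_apply, ha i hi] at this
      omega]
  · push Not at ha
    obtain ⟨i, hi, hai⟩ := ha
    rw [coeff_slice_of_exists _ ⟨i, hi, hai⟩, coeff_mul]
    refine (Finset.sum_eq_zero fun p hp => ?_).symm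
    rw [HasAntidiagonal.mem_antidiagonal] at hp
    by_cases hc : coeff p.1 g = 0
    · rw [hc, zero_mul]
    · have hp₂ : p.2 i ≠ 0 := by
        have := DFunLike.congr_fun hp i
        simp only [Finsupp.add_apply, hg.eq_zero_of_coeff_ne_zero hc hi] at this
        omega
      rw [coeff_slice_of_exists _ ⟨i, hi, hp₂⟩, mul_zero]

theorem slice_mul_of_dependsOnlyOn_compl [DecidableEq σ] {h : MvPowerSeries σ ℂ}
    (hh : DependsOnlyOn sᶜ h) (w : MvPowerSeries σ ℂ) (b : σ →₀ ℕ) :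
    slice s b (h * w) = ∑ p ∈ antidiagonal b, coeff p.1 h • slice s p.2 w := by
  ext a
  rw [map_sum]
  by_cases ha : ∀ i ∉ s, a i = 0
  · rw [coeff_slice_of_forall _ ha, add_comm,
      coeff_add_mul_of_dependsOnlyOn hh w ha]
    refine Finset.sum_congr rfl fun p _ => ?_
    rw [coeff_smul, coeff_slice_of_forall _ ha, add_comm]
  · push Not at ha
    rw [coeff_slice_of_exists _ ha]
    exact (Finset.sum_eq_zero fun p _ => by rw [coeff_smul, coeff_slice_of_exists _ ha,
      mul_zero]).symm

theorem dvd_of_forall_dvd_slice {g w : MvPowerSeries σ ℂ} (hg : DependsOnlyOn s g)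
    (H : ∀ b : σ →₀ ℕ, (∀ i ∈ s, b i = 0) → g ∣ slice s b w) : g ∣ w := by
  classical
  choose v hv using H
  have hout : ∀ ν : σ →₀ ℕ, ∀ i ∈ s, ν.filter (· ∉ s) i = 0 :=
    fun ν i hi => Finsupp.filter_apply_neg _ _ (not_not.mpr hi)
  have hin : ∀ ν : σ →₀ ℕ, ∀ i ∉ s, ν.filter (· ∈ s) i = 0 :=
    fun ν i hi => Finsupp.filter_apply_neg _ _ hi
  -- the quotient, assembled from the quotients of the slices
  let u : MvPowerSeries σ ℂ := fun ν => coeff (ν.filter (· ∈ s)) (v _ (hout ν))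
  have hu : ∀ μ, coeff μ u = coeff (μ.filter (· ∈ s)) (v _ (hout μ)) := fun _ => rfl
  refine ⟨u, ext fun ν => ?_⟩
  rw [← Finsupp.filter_add_filter_not ν (· ∈ s), ← coeff_slice_of_forall w (hin ν),
    hv _ (hout ν), coeff_add_mul_of_dependsOnlyOn hg _ (hout ν), coeff_mul]
  refine Finset.sum_congr rfl fun p hp => congrArg _ ?_
  rw [HasAntidiagonal.mem_antidiagonal] at hp
  have hp₂ : ∀ i ∉ s, p.2 i = 0 := fun i hi => by
    have := DFunLike.congr_fun hp i
    simp only [Finsupp.add_apply, hin ν i hi] at this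
    omega
  have hp₂in : (p.2 + ν.filter (· ∉ s)).filter (· ∈ s) = p.2 := Finsupp.ext fun i => by
    by_cases hi : i ∈ s <;> simp [hi, hp₂, hout ν]
  have hp₂out : (p.2 + ν.filter (· ∉ s)).filter (· ∉ s) = ν.filter (· ∉ s) :=
    Finsupp.ext fun i => by by_cases hi : i ∈ s <;> simp [hi, hp₂]
  rw [hu, hp₂in]
  congr 2
  exact hp₂out.symm

theorem dvd_of_dvd_smul {g x : MvPowerSeries σ ℂ} {c : ℂ} (hc : c ≠ 0) (h : g ∣ c • x) :
    g ∣ x := by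
  rw [← inv_smul_smul₀ hc x, smul_eq_C_mul]
  exact h.mul_left _

/-- The lowest monomial `α₀` of `h` links the slice of `w` at `b` to the slice of `h * w` at
`α₀ + b`, up to slices of `w` at lexicographically smaller monomials. -/
theorem dvd_slice_of_forall_lt [LinearOrder σ] [WellFoundedGT σ] {g h w q : MvPowerSeries σ ℂ}
    (hg : DependsOnlyOn s g) (hh : DependsOnlyOn sᶜ h) (hq : h * w = g * q) {α₀ : σ →₀ ℕ}
    (hα₀ : toLex α₀ = lexOrder h) {b : σ →₀ ℕ} (hb : ∀ i ∈ s, b i = 0)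
    (ih : ∀ β : σ →₀ ℕ, (∀ i ∈ s, β i = 0) → toLex β < toLex b → g ∣ slice s β w) :
    g ∣ slice s b w := by
  classical
  have hc₀ : coeff α₀ h ≠ 0 := coeff_ne_zero_of_lexOrder hα₀
  have hα₀s : ∀ i ∈ s, α₀ i = 0 :=
    fun i hi => hh.eq_zero_of_coeff_ne_zero hc₀ (not_not.mpr hi)
  have hsum := slice_mul_of_dependsOnlyOn_compl hh w (α₀ + b)
  rw [hq, slice_mul_of_dependsOnlyOn hg q fun i hi => by simp [hα₀s i hi, hb i hi],
    ← Finset.add_sum_erase _ _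
    (HasAntidiagonal.mem_antidiagonal.mpr rfl : (α₀, b) ∈ antidiagonal (α₀ + b))] at hsum
  have hrest : g ∣ ∑ p ∈ (antidiagonal (α₀ + b)).erase (α₀, b), coeff p.1 h • slice s p.2 w := by
    refine Finset.dvd_sum fun p hp => ?_
    obtain ⟨hne, hp⟩ := Finset.mem_erase.mp hp
    rw [HasAntidiagonal.mem_antidiagonal] at hp
    by_cases hc : coeff p.1 h = 0
    · rw [hc, zero_smul]
      exact dvd_zero g
    have hp₁ : p.1 ≠ α₀ := fun h₁ =>
      hne (Prod.ext h₁ (add_left_cancel (h₁ ▸ hp : α₀ + p.2 = α₀ + b)))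
    have hlt₁ : toLex α₀ < toLex p.1 :=
      lt_of_le_of_ne (WithTop.coe_le_coe.mp (hα₀ ▸ lexOrder_le_of_coeff_ne_zero hc))
        fun h₁ => hp₁ (toLex.injective h₁).symm
    have hlt₂ : toLex p.2 < toLex b := by
      refine lt_of_add_lt_add_left (a := toLex α₀) ?_
      calc toLex α₀ + toLex p.2 < toLex p.1 + toLex p.2 := add_lt_add_left hlt₁ _
        _ = toLex α₀ + toLex b := congrArg toLex hp
    have hp₂ : ∀ i ∈ s, p.2 i = 0 := fun i hi => by
      have := DFunLike.congr_fun hp i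
      simp only [Finsupp.add_apply, hα₀s i hi, hb i hi] at this
      omega
    rw [smul_eq_C_mul]
    exact (ih p.2 hp₂ hlt₂).mul_left _
  have hlead : g ∣ coeff α₀ h • slice s b w := by
    have := dvd_sub (dvd_mul_right g (slice s (α₀ + b) q)) hrest
    rwa [hsum, add_sub_cancel_right] at this
  exact dvd_of_dvd_smul hc₀ hlead

theorem dvd_of_dvd_mul_of_dependsOnlyOn [Finite σ] {g h w : MvPowerSeries σ ℂ}
    (hg : DependsOnlyOn s g) (hh : DependsOnlyOn sᶜ h) (h0 : h ≠ 0) (hdvd : g ∣ h * w) :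
    g ∣ w := by
  classical
  let _ : LinearOrder σ := IsWellOrder.linearOrder WellOrderingRel
  obtain ⟨q, hq⟩ := hdvd
  obtain ⟨α₀, hα₀⟩ := exists_finsupp_eq_lexOrder_of_ne_zero h0
  suffices H : ∀ β : Lex (σ →₀ ℕ), (∀ i ∈ s, ofLex β i = 0) → g ∣ slice s (ofLex β) w from
    dvd_of_forall_dvd_slice hg fun b => H (toLex b)
  intro β
  induction β using WellFoundedLT.induction with
  | ind β ih =>
    exact fun hβ => dvd_slice_of_forall_lt hg hh hq hα₀.symm hβ
      fun β' hβ' hlt => ih (toLex β') hlt hβ'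

theorem mem_logDer_mul_of_apply_eq_zero {g h : MvPowerSeries σ ℂ}
    {D : Derivation ℂ (MvPowerSeries σ ℂ) (MvPowerSeries σ ℂ)} (hD : D ∈ logDer g)
    (hDh : D h = 0) : D ∈ logDer (g * h) := by
  obtain ⟨c, hc⟩ := Ideal.mem_span_singleton.mp hD
  change D (g * h) ∈ Ideal.span {g * h}
  rw [Derivation.leibniz, hDh, smul_zero, zero_add, smul_eq_mul, Ideal.mem_span_singleton, hc,
    mul_comm g h]
  exact mul_dvd_mul_left h (dvd_mul_right g c)

theorem mem_logDer_of_add_mem_logDer_mul [Finite σ] {g h : MvPowerSeries σ ℂ}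
    (hg : DependsOnlyOn s g) (hh : DependsOnlyOn sᶜ h) (h0 : h ≠ 0)
    {D₁ D₂ : Derivation ℂ (MvPowerSeries σ ℂ) (MvPowerSeries σ ℂ)} (hD₁ : D₁ h = 0)
    (hD₂ : D₂ g = 0) (hD : D₁ + D₂ ∈ logDer (g * h)) : D₁ ∈ logDer g := by
  obtain ⟨c, hc⟩ := Ideal.mem_span_singleton.mp hD
  simp only [Derivation.leibniz, Derivation.add_apply, hD₁, hD₂, smul_eq_mul] at hc
  refine Ideal.mem_span_singleton.mpr (dvd_of_dvd_mul_of_dependsOnlyOn hg hh h0 ⟨h * c - D₂ h, ?_⟩)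
  linear_combination hc

end SeparatedVariables

/-- Splitting of logarithmic derivations for separated variables: if `g` depends only on the
`x`-variables and `h` only on the `y`-variables (both reduced), then `Der(log gh)` is the
direct sum of the submodule of derivations lying in the span of the `∂ₓ`'s that preserve `(g)`
and the submodule of derivations lying in the span of the `∂_y`'s that preserve `(h)`. -/
theorem logDer_splitting {n m : ℕ} (g h : MvPowerSeries (Fin n ⊕ Fin m) ℂ)
    (hgx : DependsOnlyOn (Set.range (Sum.inl : Fin n → Fin n ⊕ Fin m)) g)
    (hhy : DependsOnlyOn (Set.range (Sum.inr : Fin m → Fin n ⊕ Fin m)) h)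
    (hg : Squarefree g) (hh : Squarefree h) :
    (Submodule.span (MvPowerSeries (Fin n ⊕ Fin m) ℂ)
        (Set.range fun i : Fin n => (pderivD (Sum.inl i) :
          Derivation ℂ (MvPowerSeries (Fin n ⊕ Fin m) ℂ) (MvPowerSeries (Fin n ⊕ Fin m) ℂ)))
        ⊓ logDer g)
      ⊓ (Submodule.span (MvPowerSeries (Fin n ⊕ Fin m) ℂ)
        (Set.range fun j : Fin m => (pderivD (Sum.inr j) :
          Derivation ℂ (MvPowerSeries (Fin n ⊕ Fin m) ℂ) (MvPowerSeries (Fin n ⊕ Fin m) ℂ)))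
        ⊓ logDer h) = ⊥
    ∧
    (Submodule.span (MvPowerSeries (Fin n ⊕ Fin m) ℂ)
        (Set.range fun i : Fin n => (pderivD (Sum.inl i) :
          Derivation ℂ (MvPowerSeries (Fin n ⊕ Fin m) ℂ) (MvPowerSeries (Fin n ⊕ Fin m) ℂ)))
        ⊓ logDer g)
      ⊔ (Submodule.span (MvPowerSeries (Fin n ⊕ Fin m) ℂ)
        (Set.range fun j : Fin m => (pderivD (Sum.inr j) :
          Derivation ℂ (MvPowerSeries (Fin n ⊕ Fin m) ℂ) (MvPowerSeries (Fin n ⊕ Fin m) ℂ)))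
        ⊓ logDer h) = logDer (g * h) := by
  have hgx' : DependsOnlyOn (Set.range Sum.inr)ᶜ g := Set.compl_range_inr ▸ hgx
  have hhy' : DependsOnlyOn (Set.range Sum.inl)ᶜ h := Set.compl_range_inl ▸ hhy
  have vanish_x {f} (hf : DependsOnlyOn (Set.range Sum.inr) f) {D} (hD : D ∈ Submodule.span _
      (Set.range fun i : Fin n => pderivD (Sum.inl i : Fin n ⊕ Fin m))) : D f = 0 :=
    apply_eq_zero_of_mem_span_pderivD (by simp) hf hD
  have vanish_y {f} (hf : DependsOnlyOn (Set.range Sum.inl) f) {D} (hD : D ∈ Submodule.span _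
      (Set.range fun j : Fin m => pderivD (Sum.inr j : Fin n ⊕ Fin m))) : D f = 0 :=
    apply_eq_zero_of_mem_span_pderivD (by simp) hf hD
  refine ⟨eq_bot_iff.mpr ?_, le_antisymm (sup_le ?_ ?_) fun D hD => ?_⟩
  · rintro D ⟨⟨hDx, -⟩, hDy, -⟩
    refine (Submodule.mem_bot _).mpr (MvPowerSeries.derivation_eq_zero ?_)
    rintro (i | j)
    · exact vanish_y (dependsOnlyOn_X ⟨i, rfl⟩) hDy
    · exact vanish_x (dependsOnlyOn_X ⟨j, rfl⟩) hDx
  · rintro D ⟨hDx, hDg⟩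
    exact mem_logDer_mul_of_apply_eq_zero hDg (vanish_x hhy hDx)
  · rintro D ⟨hDy, hDh⟩
    rw [mul_comm]
    exact mem_logDer_mul_of_apply_eq_zero hDh (vanish_y hgx hDy)
  · rw [derivation_eq_sum_pderivD D, Fintype.sum_sum_type] at hD ⊢
    have hsum_x := sum_smul_pderivD_mem_span Sum.inl fun i : Fin n => D (X (Sum.inl i))
    have hsum_y := sum_smul_pderivD_mem_span Sum.inr fun j : Fin m => D (X (Sum.inr j))
    refine Submodule.add_mem_sup ⟨hsum_x, ?_⟩ ⟨hsum_y, ?_⟩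
    · exact mem_logDer_of_add_mem_logDer_mul hgx hhy' hh.ne_zero (vanish_x hhy hsum_x)
        (vanish_y hgx hsum_y) hD
    · rw [mul_comm, add_comm] at hD
      exact mem_logDer_of_add_mem_logDer_mul hhy hgx' hg.ne_zero (vanish_y hgx hsum_y)
        (vanish_x hhy hsum_x) hD
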